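/- arXiv:2101.01443 — 2 statements merged into one kernel-verified Lean document; each statement's English description precedes it below -/
import Mathlib

section
/- (Lemma 1, Eq. (3.6).) Let X be a complex Banach space, t₀ ∈ ℝ, and U : ℝ → B(X) differentiable at t₀ with derivative U′, such that U(t₀) is invertible in B(X) and U(t₀) commutes with U′. Let η ∈ ℂ, η ≠ 0, be such that 1 − η⁻¹U(t) is invertible in B(X) for all t, write I_η(t) := (1 − η⁻¹U(t))⁻¹ and I_η := I_η(t₀), and let D ∈ B(X) be the derivative of t ↦ I_η(t) at t₀. Assume I_η − 1 is invertible in B(X) and ν ∈ ℂ is such that I_η + ((ν−η)/η)·1 and I_η + ν·1 are invertible in B(X). Then the infinitesimal generator A := U′ ∘ U(t₀)⁻¹ has the logarithmic representation A = (1 + (ν/η)·(I_η − 1)⁻¹) ∘ ((I_η + ((ν−η)/η)·1)⁻¹ ∘ D) − (1 + ν·I_η⁻¹) ∘ ((I_η + ν·1)⁻¹ ∘ D). -/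
/-!
The derivative of the resolvent is `D = η⁻¹ Iη U' Iη`. The inverses
`(Iη - 1)⁻¹ = η U⁻¹ (1 - η⁻¹ U)` and `Iη⁻¹ = 1 - η⁻¹ U` are explicit, and whenever `P Q = 1`
one has `1 + c P = P (Q + c)`; so the factors `1 + (ν/η) (Iη - 1)⁻¹` and `1 + ν Iη⁻¹` cancel
the shifted resolvents and the right-hand side does not depend on `ν`. What is left,
`((Iη - 1)⁻¹ - Iη⁻¹) D`, collapses to `U' U⁻¹` because `U'` commutes with `U⁻¹`.
-/

open scoped Ring

theorem Ring.inverse_eq_of_mul_eq_one {M₀ : Type*} [MonoidWithZero M₀] {a b : M₀}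
    (hab : a * b = 1) (hba : b * a = 1) : a⁻¹ʳ = b :=
  Ring.inverse_unit ⟨a, b, hab, hba⟩

theorem Commute.ringInverse_left {M₀ : Type*} [MonoidWithZero M₀] {a b : M₀} (ha : IsUnit a)
    (h : Commute a b) : Commute a⁻¹ʳ b := by
  obtain ⟨a, rfl⟩ := ha
  rw [Ring.inverse_unit]
  exact h.units_inv_left

theorem HasDerivAt.ringInverse {𝕜 R : Type*} [NontriviallyNormedField 𝕜] [NormedRing R]
    [HasSummableGeomSeries R] [NormedAlgebra 𝕜 R] {f : 𝕜 → R} {f' : R} {t : 𝕜}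
    (hf : HasDerivAt f f' t) (ht : IsUnit (f t)) :
    HasDerivAt (fun s => (f s)⁻¹ʳ) (-((f t)⁻¹ʳ * f' * (f t)⁻¹ʳ)) t := by
  obtain ⟨x, hx⟩ := ht
  have := (hx ▸ hasFDerivAt_ringInverse (𝕜 := 𝕜) x).comp_hasDerivAt t hf
  rw [← hx, Ring.inverse_unit]
  exact this

theorem one_add_smul_mul_inverse_add_smul_one {𝕜 R : Type*} [CommSemiring 𝕜] [Semiring R]
    [Algebra 𝕜 R] {P Q : R} (hPQ : P * Q = 1) {c : 𝕜} (hc : IsUnit (Q + c • 1)) :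
    (1 + c • P) * (Q + c • 1)⁻¹ʳ = P := by
  refine ((Ring.eq_mul_inverse_iff_mul_eq _ _ _ hc).mpr ?_).symm
  rw [mul_add, hPQ, mul_smul_comm, mul_one]

section ScaledResolvent

variable {𝕜 R : Type*} [Field 𝕜] [Ring R] [Algebra 𝕜 R]

/-- The paper's `I_η(u) = (1 - η⁻¹ u)⁻¹`; for `η ≠ 0` it is `η • resolvent u η`. -/
noncomputable def scaledResolvent (η : 𝕜) (u : R) : R := (1 - η⁻¹ • u)⁻¹ʳ

variable {u : R} {η : 𝕜}

theorem scaledResolvent_mul (hB : IsUnit (1 - η⁻¹ • u)) :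
    scaledResolvent η u * (1 - η⁻¹ • u) = 1 :=
  Ring.inverse_mul_cancel _ hB

theorem mul_scaledResolvent (hB : IsUnit (1 - η⁻¹ • u)) :
    (1 - η⁻¹ • u) * scaledResolvent η u = 1 :=
  Ring.mul_inverse_cancel _ hB

theorem inverse_scaledResolvent (hB : IsUnit (1 - η⁻¹ • u)) :
    (scaledResolvent η u)⁻¹ʳ = 1 - η⁻¹ • u :=
  Ring.inverse_inverse hB

theorem scaledResolvent_sub_one (hB : IsUnit (1 - η⁻¹ • u)) :
    scaledResolvent η u - 1 = η⁻¹ • (scaledResolvent η u * u) :=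
  calc scaledResolvent η u - 1 = scaledResolvent η u * (1 - (1 - η⁻¹ • u)) := by
        rw [mul_sub, mul_one, scaledResolvent_mul hB]
    _ = η⁻¹ • (scaledResolvent η u * u) := by rw [sub_sub_cancel, mul_smul_comm]

theorem smul_inverse_mul_mul_scaledResolvent_sub_one (hu : IsUnit u)
    (hB : IsUnit (1 - η⁻¹ • u)) (hη : η ≠ 0) :
    η • (u⁻¹ʳ * (1 - η⁻¹ • u)) * (scaledResolvent η u - 1) = 1 := by
  rw [scaledResolvent_sub_one hB, smul_mul_smul_comm, mul_inv_cancel₀ hη, one_smul, mul_assoc,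
    ← mul_assoc (1 - η⁻¹ • u), mul_scaledResolvent hB, one_mul, Ring.inverse_mul_cancel _ hu]

theorem scaledResolvent_sub_one_mul_smul_inverse_mul (hu : IsUnit u)
    (hB : IsUnit (1 - η⁻¹ • u)) (hη : η ≠ 0) :
    (scaledResolvent η u - 1) * (η • (u⁻¹ʳ * (1 - η⁻¹ • u))) = 1 := by
  rw [scaledResolvent_sub_one hB, smul_mul_smul_comm, inv_mul_cancel₀ hη, one_smul, mul_assoc,
    Ring.mul_inverse_cancel_left _ _ hu, scaledResolvent_mul hB]

theorem inverse_scaledResolvent_sub_one (hu : IsUnit u) (hB : IsUnit (1 - η⁻¹ • u))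
    (hη : η ≠ 0) : (scaledResolvent η u - 1)⁻¹ʳ = η • (u⁻¹ʳ * (1 - η⁻¹ • u)) :=
  Ring.inverse_eq_of_mul_eq_one (scaledResolvent_sub_one_mul_smul_inverse_mul hu hB hη)
    (smul_inverse_mul_mul_scaledResolvent_sub_one hu hB hη)

theorem mul_inverse_eq_inverse_scaledResolvent_sub_one_mul_sub {U' : R} (hu : IsUnit u)
    (hcomm : Commute u U') (hB : IsUnit (1 - η⁻¹ • u)) (hη : η ≠ 0) :
    let J := scaledResolvent η u
    U' * u⁻¹ʳ = (J - 1)⁻¹ʳ * (η⁻¹ • (J * U' * J)) - J⁻¹ʳ * (η⁻¹ • (J * U' * J)) := by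
  intro J
  rw [inverse_scaledResolvent_sub_one hu hB hη, inverse_scaledResolvent hB]
  set B := 1 - η⁻¹ • u with hBdef
  have hBD : B * (η⁻¹ • (J * U' * J)) = η⁻¹ • (U' * J) := by
    rw [mul_smul_comm, ← mul_assoc, ← mul_assoc, mul_scaledResolvent hB, one_mul]
  have hvB : u⁻¹ʳ * B = u⁻¹ʳ - η⁻¹ • 1 := by
    rw [hBdef, mul_sub, mul_one, mul_smul_comm, Ring.inverse_mul_cancel _ hu]
  symm
  calc η • (u⁻¹ʳ * B) * (η⁻¹ • (J * U' * J)) - B * (η⁻¹ • (J * U' * J))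
      = u⁻¹ʳ * (U' * J) - η⁻¹ • (U' * J) := by
        rw [smul_mul_assoc, mul_assoc, hBD, mul_smul_comm, smul_smul, mul_inv_cancel₀ hη,
          one_smul]
    _ = U' * ((u⁻¹ʳ - η⁻¹ • 1) * J) := by
        rw [← mul_assoc, (hcomm.ringInverse_left hu).eq, sub_mul, smul_mul_assoc, one_mul,
          mul_sub, mul_smul_comm, mul_assoc]
    _ = U' * u⁻¹ʳ := by rw [← hvB, mul_assoc, mul_scaledResolvent hB, mul_one]

theorem mul_inverse_eq_log_representation {U' J D : R} (ν : 𝕜) (hu : IsUnit u)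
    (hcomm : Commute u U') (hB : IsUnit (1 - η⁻¹ • u)) (hη : η ≠ 0)
    (hJ : J = scaledResolvent η u) (hD : D = η⁻¹ • (J * U' * J))
    (hν₁ : IsUnit (J + ((ν - η) / η) • 1)) (hν₂ : IsUnit (J + ν • 1)) :
    U' * u⁻¹ʳ = (1 + (ν / η) • (J - 1)⁻¹ʳ) * ((J + ((ν - η) / η) • 1)⁻¹ʳ * D)
      - (1 + ν • J⁻¹ʳ) * ((J + ν • 1)⁻¹ʳ * D) := by
  subst hD
  have hP₁ : (J - 1)⁻¹ʳ * (J - 1) = 1 := by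
    rw [hJ, inverse_scaledResolvent_sub_one hu hB hη]
    exact smul_inverse_mul_mul_scaledResolvent_sub_one hu hB hη
  have hP₂ : J⁻¹ʳ * J = 1 := by
    rw [hJ, inverse_scaledResolvent hB]
    exact mul_scaledResolvent hB
  have hshift : J + ((ν - η) / η) • 1 = (J - 1) + (ν / η) • 1 := by
    rw [sub_div, div_self hη, sub_smul, one_smul]
    abel
  rw [hshift] at hν₁ ⊢
  simp only [← mul_assoc]
  rw [one_add_smul_mul_inverse_add_smul_one hP₁ hν₁,
    one_add_smul_mul_inverse_add_smul_one hP₂ hν₂]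
  subst hJ
  exact mul_inverse_eq_inverse_scaledResolvent_sub_one_mul_sub hu hcomm hB hη

end ScaledResolvent

theorem stmt_5_general {X : Type*} [NormedAddCommGroup X] [NormedSpace ℂ X] [CompleteSpace X]
    (t₀ : ℝ) (U : ℝ → X →L[ℂ] X) (U' : X →L[ℂ] X)
    (hU : HasDerivAt U U' t₀) (hUinv : IsUnit (U t₀))
    (hcomm : U t₀ * U' = U' * U t₀)
    (η : ℂ) (hη : η ≠ 0)
    (hres : ∀ t : ℝ, IsUnit (1 - η⁻¹ • U t))
    (Iη : X →L[ℂ] X) (hIη : Iη = Ring.inverse (1 - η⁻¹ • U t₀))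
    (D : X →L[ℂ] X)
    (hD : HasDerivAt (fun t => Ring.inverse (1 - η⁻¹ • U t)) D t₀)
    (ν : ℂ)
    (h2 : IsUnit (Iη + ((ν - η) / η) • 1))
    (h3 : IsUnit (Iη + ν • 1)) :
    U' * Ring.inverse (U t₀) =
      (1 + (ν / η) • Ring.inverse (Iη - 1)) *
        (Ring.inverse (Iη + ((ν - η) / η) • 1) * D)
      - (1 + ν • Ring.inverse Iη) * (Ring.inverse (Iη + ν • 1) * D) := by
  have hD' : D = η⁻¹ • (Iη * U' * Iη) := by
    refine hD.unique ?_
    simpa [hIη, smul_mul_assoc, mul_smul_comm] using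
      ((hU.const_smul η⁻¹).const_sub 1).ringInverse (hres t₀)
  exact mul_inverse_eq_log_representation ν hUinv hcomm (hres t₀) hη hIη hD' h2 h3

/-- Lemma 1, Eq. (3.6): the logarithmic representation of the infinitesimal
generator `A = U' ∘ U(t₀)⁻¹` via the doubly-implemented resolvent, where
`Iη = (1 - η⁻¹ U(t₀))⁻¹` and `D` is the derivative of the resolvent family at `t₀`. -/
theorem stmt_5 {X : Type*} [NormedAddCommGroup X] [NormedSpace ℂ X] [CompleteSpace X]
    (t₀ : ℝ) (U : ℝ → X →L[ℂ] X) (U' : X →L[ℂ] X)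
    (hU : HasDerivAt U U' t₀) (hUinv : IsUnit (U t₀))
    (hcomm : U t₀ * U' = U' * U t₀)
    (η : ℂ) (hη : η ≠ 0)
    (hres : ∀ t : ℝ, IsUnit (1 - η⁻¹ • U t))
    (Iη : X →L[ℂ] X) (hIη : Iη = Ring.inverse (1 - η⁻¹ • U t₀))
    (D : X →L[ℂ] X)
    (hD : HasDerivAt (fun t => Ring.inverse (1 - η⁻¹ • U t)) D t₀)
    (ν : ℂ)
    (h1 : IsUnit (Iη - 1))
    (h2 : IsUnit (Iη + ((ν - η) / η) • 1))
    (h3 : IsUnit (Iη + ν • 1)) :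
    U' * Ring.inverse (U t₀) =
      (1 + (ν / η) • Ring.inverse (Iη - 1)) *
        (Ring.inverse (Iη + ((ν - η) / η) • 1) * D)
      - (1 + ν • Ring.inverse Iη) * (Ring.inverse (Iη + ν • 1) * D) :=
  stmt_5_general t₀ U U' hU hUinv hcomm η hη hres Iη hIη D hD ν h2 h3
end

section
/- (Theorem 3, Eq. (3.9), precise form.) Let X be a complex Banach space, t₀ ∈ ℝ, and U : ℝ → B(X) differentiable at t₀ with derivative U′, such that U(t₀) is invertible in B(X) and U(t₀) commutes with U′. Let η ∈ ℂ, η ≠ 0, be such that 1 − η⁻¹U(t) is invertible in B(X) for all t, write I_η := (1 − η⁻¹U(t₀))⁻¹, let D ∈ B(X) be the derivative of t ↦ (1 − η⁻¹U(t))⁻¹ at t₀, and assume I_η − 1 is invertible in B(X). Let ν ∈ ℂ and let a₁′, a₂′ ∈ B(X) be alternative infinitesimal generators, i.e. there exist a₁, a₂ ∈ B(X) with exp(a₁) = η·I_η + (ν−η)·1 and exp(a₂) = I_η + ν·1 (these are the shifted operators of Eq. (3.5)), satisfying the chain-rule relations a₁′ ∘ exp(a₁) = η·D and a₂′ ∘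 exp(a₂) = D, and such that a₁′ and a₂′ commute with I_η. Then the infinitesimal generator A := U′ ∘ U(t₀)⁻¹ is represented as A = (1 + ν·(η·(I_η − 1))⁻¹) ∘ a₁′ − (1 + ν·I_η⁻¹) ∘ a₂′. -/
/-!
Writing `Iη⁻¹ = 1 - η⁻¹ U(t₀)`, one has `U(t₀) = η (1 - Iη⁻¹)`, and differentiating the
resolvent gives `D = Iη (η⁻¹ U') Iη`. Since `exp aᵢ` is a translate of a multiple of `Iη - 1`
resp. `Iη`, the prefactors collapse: `(1 + ν (η (Iη - 1))⁻¹) a₁' = (Iη - 1)⁻¹ D` and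
`(1 + ν Iη⁻¹) a₂' = Iη⁻¹ D`. The resolvent identity `(Iη - 1)⁻¹ - Iη⁻¹ = (Iη - 1)⁻¹ Iη⁻¹` and
the commutation of `U'` with `Iη` then turn their difference into `U' U(t₀)⁻¹`.
-/

open scoped Ring

theorem Commute.ringInverse_right {M₀ : Type*} [MonoidWithZero M₀] {a b : M₀}
    (h : Commute a b) : Commute a b⁻¹ʳ := by
  by_cases hb : IsUnit b
  · obtain ⟨u, rfl⟩ := hb
    rw [Ring.inverse_unit]
    exact h.units_inv_right
  · rw [Ring.inverse_non_unit b hb]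
    exact Commute.zero_right a

theorem Ring.inverse_smul {𝕜 A : Type*} [Field 𝕜] [Ring A] [Algebra 𝕜 A] {c : 𝕜}
    (hc : c ≠ 0) (a : A) : (c • a)⁻¹ʳ = c⁻¹ • a⁻¹ʳ := by
  have hcu : (algebraMap 𝕜 A c)⁻¹ʳ = algebraMap 𝕜 A c⁻¹ :=
    Ring.inverse_unit ((Units.mk0 c hc).map (algebraMap 𝕜 A).toMonoidHom)
  rw [Algebra.smul_def, Ring.mul_inverse_rev' (Algebra.commutes c a), hcu, ← Algebra.commutes,
    ← Algebra.smul_def]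

theorem Ring.inverse_sub_one_sub_inverse {A : Type*} [Ring A] {a : A} (ha : IsUnit a)
    (ha1 : IsUnit (a - 1)) : (a - 1)⁻¹ʳ - a⁻¹ʳ = (a - 1)⁻¹ʳ * a⁻¹ʳ := by
  rw [Ring.inverse_sub_inverse (iff_of_true ha1 ha), sub_sub_cancel, mul_one]

theorem Ring.inverse_one_sub_inverse {A : Type*} [Ring A] {a : A} (ha : IsUnit a) :
    (1 - a⁻¹ʳ)⁻¹ʳ = a * (a - 1)⁻¹ʳ := by
  have hfactor : 1 - a⁻¹ʳ = (a - 1) * a⁻¹ʳ := by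
    rw [sub_mul, Ring.mul_inverse_cancel a ha, one_mul]
  have hcomm : Commute (a - 1) a⁻¹ʳ :=
    ((Commute.refl a).sub_left (Commute.one_left a)).ringInverse_right
  rw [hfactor, Ring.mul_inverse_rev' hcomm, Ring.inverse_inverse ha]

theorem one_add_smul_inverse_mul {R A : Type*} [CommSemiring R] [Semiring A] [Algebra R A]
    (ν : R) {c a : A} (hc : IsUnit c) (ha : Commute a c) :
    (1 + ν • c⁻¹ʳ) * a = c⁻¹ʳ * (a * (c + ν • 1)) :=
  calc (1 + ν • c⁻¹ʳ) * a = c⁻¹ʳ * (c + ν • 1) * a := by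
        rw [mul_add, Ring.inverse_mul_cancel c hc, mul_smul_comm, mul_one]
    _ = c⁻¹ʳ * (a * (c + ν • 1)) := by
        rw [mul_assoc, (ha.add_right ((Commute.one_right a).smul_right ν)).eq]

theorem mul_inverse_smul_one_sub_inverse {𝕜 A : Type*} [Field 𝕜] [Ring A] [Algebra 𝕜 A]
    {η : 𝕜} (hη : η ≠ 0) {a b : A} (ha : IsUnit a) (ha1 : IsUnit (a - 1)) (hb : Commute b a) :
    b * (η • (1 - a⁻¹ʳ))⁻¹ʳ = ((a - 1)⁻¹ʳ - a⁻¹ʳ) * (a * (η⁻¹ • b) * a) := by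
  have hba1 : Commute (b * a) (a - 1)⁻¹ʳ :=
    ((hb.sub_right (Commute.one_right b)).mul_left
      ((Commute.refl a).sub_right (Commute.one_right a))).ringInverse_right
  calc b * (η • (1 - a⁻¹ʳ))⁻¹ʳ = η⁻¹ • (b * a * (a - 1)⁻¹ʳ) := by
        rw [Ring.inverse_smul hη, Ring.inverse_one_sub_inverse ha, mul_smul_comm, mul_assoc]
    _ = η⁻¹ • ((a - 1)⁻¹ʳ * (a⁻¹ʳ * a) * b * a) := by
        rw [hba1.eq, Ring.inverse_mul_cancel a ha, mul_one, mul_assoc]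
    _ = ((a - 1)⁻¹ʳ - a⁻¹ʳ) * (a * (η⁻¹ • b) * a) := by
        rw [Ring.inverse_sub_one_sub_inverse ha ha1]
        simp only [mul_smul_comm, smul_mul_assoc, mul_assoc]

theorem stmt_8_general {X : Type*} [NormedAddCommGroup X] [NormedSpace ℂ X] [CompleteSpace X]
    (t₀ : ℝ) (U : ℝ → X →L[ℂ] X) (U' : X →L[ℂ] X)
    (hU : HasDerivAt U U' t₀)
    (hcomm : U t₀ * U' = U' * U t₀)
    (η : ℂ) (hη : η ≠ 0)
    (hres : ∀ t : ℝ, IsUnit (1 - η⁻¹ • U t))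
    (Iη : X →L[ℂ] X) (hIη : Iη = Ring.inverse (1 - η⁻¹ • U t₀))
    (D : X →L[ℂ] X)
    (hD : HasDerivAt (fun t => Ring.inverse (1 - η⁻¹ • U t)) D t₀)
    (h1 : IsUnit (Iη - 1)) (ν : ℂ)
    (a₁ a₂ a₁' a₂' : X →L[ℂ] X)
    (he1 : NormedSpace.exp a₁ = η • Iη + (ν - η) • 1)
    (he2 : NormedSpace.exp a₂ = Iη + ν • 1)
    (hc1 : a₁' * NormedSpace.exp a₁ = η • D)
    (hc2 : a₂' * NormedSpace.exp a₂ = D)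
    (hca1 : a₁' * Iη = Iη * a₁') (hca2 : a₂' * Iη = Iη * a₂') :
    U' * Ring.inverse (U t₀) =
      (1 + ν • Ring.inverse (η • (Iη - 1))) * a₁'
      - (1 + ν • Ring.inverse Iη) * a₂' := by
  have hR := hres t₀
  have hI : IsUnit Iη := hIη ▸ hR.ringInverse
  have hU₀ : U t₀ = η • (1 - Iη⁻¹ʳ) := by
    rw [hIη, Ring.inverse_inverse hR, sub_sub_cancel, smul_inv_smul₀ hη]
  have hDval : D = Iη * (η⁻¹ • U') * Iη := by
    refine hD.unique ?_
    simpa only [Pi.smul_apply, ← hIη, mul_neg, neg_mul, neg_neg] using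
      ((hU.const_smul η⁻¹).const_sub 1).ringInverse hR
  have hU'R : Commute U' (1 - η⁻¹ • U t₀) :=
    (Commute.one_right U').sub_right ((Commute.symm hcomm).smul_right η⁻¹)
  have hU'I : Commute U' Iη := hIη ▸ hU'R.ringInverse_right
  have hpre₁ : (1 + ν • (η • (Iη - 1))⁻¹ʳ) * a₁' = (Iη - 1)⁻¹ʳ * D := by
    have hexp : η • (Iη - 1) + ν • 1 = NormedSpace.exp a₁ := by rw [he1]; module
    have hunit : IsUnit (η • (Iη - 1)) := h1.smul (Units.mk0 η hη)
    have hcomm₁ : Commute a₁' (η • (Iη - 1)) :=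
      (Commute.sub_right hca1 (Commute.one_right a₁')).smul_right η
    rw [one_add_smul_inverse_mul ν hunit hcomm₁, hexp, hc1, Ring.inverse_smul hη,
      smul_mul_smul_comm, inv_mul_cancel₀ hη, one_smul]
  have hpre₂ : (1 + ν • Iη⁻¹ʳ) * a₂' = Iη⁻¹ʳ * D := by
    rw [one_add_smul_inverse_mul ν hI hca2, ← he2, hc2]
  rw [hpre₁, hpre₂, ← sub_mul, hU₀, hDval]
  exact mul_inverse_smul_one_sub_inverse hη hI h1 hU'I

/-- Theorem 3, Eq. (3.9): the logarithmic representation of the infinitesimal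
generator `A = U' ∘ U(t₀)⁻¹` using alternative infinitesimal generators `a₁', a₂'` attached to
the shifted operators `exp a₁ = η Iη + (ν-η) 1` and `exp a₂ = Iη + ν 1`. -/
theorem stmt_8 {X : Type*} [NormedAddCommGroup X] [NormedSpace ℂ X] [CompleteSpace X]
    (t₀ : ℝ) (U : ℝ → X →L[ℂ] X) (U' : X →L[ℂ] X)
    (hU : HasDerivAt U U' t₀) (hUinv : IsUnit (U t₀))
    (hcomm : U t₀ * U' = U' * U t₀)
    (η : ℂ) (hη : η ≠ 0)
    (hres : ∀ t : ℝ, IsUnit (1 - η⁻¹ • U t))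
    (Iη : X →L[ℂ] X) (hIη : Iη = Ring.inverse (1 - η⁻¹ • U t₀))
    (D : X →L[ℂ] X)
    (hD : HasDerivAt (fun t => Ring.inverse (1 - η⁻¹ • U t)) D t₀)
    (h1 : IsUnit (Iη - 1)) (ν : ℂ)
    (a₁ a₂ a₁' a₂' : X →L[ℂ] X)
    (he1 : NormedSpace.exp a₁ = η • Iη + (ν - η) • 1)
    (he2 : NormedSpace.exp a₂ = Iη + ν • 1)
    (hc1 : a₁' * NormedSpace.exp a₁ = η • D)
    (hc2 : a₂' * NormedSpace.exp a₂ = D)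
    (hca1 : a₁' * Iη = Iη * a₁') (hca2 : a₂' * Iη = Iη * a₂') :
    U' * Ring.inverse (U t₀) =
      (1 + ν • Ring.inverse (η • (Iη - 1))) * a₁'
      - (1 + ν • Ring.inverse Iη) * a₂' :=
  stmt_8_general t₀ U U' hU hcomm η hη hres Iη hIη D hD h1 ν a₁ a₂ a₁' a₂' he1 he2 hc1 hc2 hca1 hca2
end
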